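/- arXiv:1807.08423 — 2 statements merged into one kernel-verified Lean document; each statement's English description precedes it below -/
import Mathlib

section
/- Let n, Δ ∈ ℕ \ {1} and let t be an integer with 1 ≤ t ≤ n. Then for any rooted tree (T, r) on n vertices with Δ(T) ≤ Δ, there exists a collection 𝒮 of pairwise vertex-disjoint rooted subtrees of T such that: (1) S ⊆ T(x) for every (S, x) ∈ 𝒮; (2) t ≤ |S| ≤ 2Δt for every (S, x) ∈ 𝒮; and (3) ⋃_{(S,x) ∈ 𝒮} V(S) = V(T). -/
/-!
Among the vertices whose subtree has at least `t` vertices pick one, `v`, with a minimal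
subtree. Every child of `v` then has fewer than `t` descendants, so by the degree bound
`|T(v)| ≤ 1 + Δ(t - 1) ≤ Δt`, and `T(v)`, rooted at `v`, can be cut off as a piece. The
remaining vertices are still closed under taking ancestors and there are at least `t` of them
as long as more than `2Δt` vertices were left; once at most `2Δt` remain, they form the last
piece, rooted at `r`.
-/

open SimpleGraph

namespace ApproxDecomp

noncomputable def deg {V : Type*} (G : SimpleGraph V) (v : V) : ℕ :=
  (G.neighborSet v).ncard

section Ancestors

variable {V : Type*} {T : SimpleGraph V} {r u v w : V}

/-- `w ∈ T(u)` in the tree `T` rooted at `r`. -/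
def IsAncestor (T : SimpleGraph V) (r u w : V) : Prop :=
  ∀ p : T.Walk r w, p.IsPath → u ∈ p.support

lemma isAncestor_iff_mem_support (hT : T.IsTree) {p : T.Walk r w} (hp : p.IsPath) :
    IsAncestor T r u w ↔ u ∈ p.support :=
  ⟨fun h => h p hp, fun h q hq => by rwa [(hT.existsUnique_path r w).unique hq hp]⟩

lemma isAncestor_refl : IsAncestor T r w w := fun p _ => p.end_mem_support

lemma root_isAncestor : IsAncestor T r r w := fun p _ => p.start_mem_support

lemma IsAncestor.trans (huv : IsAncestor T r u v) (hvw : IsAncestor T r v w) :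
    IsAncestor T r u w := by
  classical
  exact fun p hp => p.support_takeUntil_subset_support (hvw p hp) (huv _ (hp.takeUntil _))

lemma IsAncestor.antisymm (hT : T.IsTree) (huw : IsAncestor T r u w)
    (hwu : IsAncestor T r w u) : u = w := by
  classical
  obtain ⟨p, hp⟩ := (hT.existsUnique_path r w).exists
  have hu : u ∈ p.support := huw p hp
  have hw : w ∈ (p.takeUntil u hu).support := hwu _ (hp.takeUntil hu)
  have hprefix : (p.takeUntil u hu).takeUntil w hw = p :=
    (hT.existsUnique_path r w).unique ((hp.takeUntil hu).takeUntil hw) hp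
  have hle := Walk.length_takeUntil_le_length (p.takeUntil u hu) hw
  have hsplit := congrArg Walk.length (p.take_spec hu)
  rw [hprefix] at hle
  rw [Walk.length_append] at hsplit
  exact Walk.eq_of_length_eq_zero (p := p.dropUntil u hu) (by omega)

lemma isAncestor_of_mem_support_dropUntil [DecidableEq V] (hT : T.IsTree) {p : T.Walk r w}
    (hp : p.IsPath) (hv : v ∈ p.support) (hu : u ∈ (p.dropUntil v hv).support) :
    IsAncestor T r v u := by
  have hpath : ((p.takeUntil v hv).append ((p.dropUntil v hv).takeUntil u hu)).IsPath := by
    have hp' := hp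
    rw [← p.take_spec hv, ← (p.dropUntil v hv).take_spec hu, Walk.append_assoc] at hp'
    exact hp'.of_append_left
  exact (isAncestor_iff_mem_support hT hpath).2
    (Walk.support_subset_support_append_left _ _ (Walk.end_mem_support _))

lemma exists_adj_isAncestor_of_isAncestor (hT : T.IsTree) (hvw : IsAncestor T r v w)
    (hne : v ≠ w) : ∃ c, T.Adj v c ∧ IsAncestor T r v c ∧ IsAncestor T r c w := by
  classical
  obtain ⟨p, hp⟩ := (hT.existsUnique_path r w).exists
  have hv : v ∈ p.support := hvw p hp
  cases hq : p.dropUntil v hv with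
  | nil => exact absurd rfl hne
  | @cons _ c _ hadj q =>
    have hc : c ∈ (p.dropUntil v hv).support := by simp [hq]
    exact ⟨c, hadj, isAncestor_of_mem_support_dropUntil hT hp hv hc,
      (isAncestor_iff_mem_support hT hp).2 (p.support_dropUntil_subset_support hv hc)⟩

end Ancestors

section Descendants

variable {V : Type*} {T : SimpleGraph V} {r v w : V} {S : Finset V} {Δ t : ℕ}

def IsAncestorClosed (T : SimpleGraph V) (r : V) (S : Finset V) : Prop :=
  ∀ w ∈ S, ∀ u, IsAncestor T r u w → u ∈ S

open scoped Classical in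
noncomputable def descendantsIn (T : SimpleGraph V) (r : V) (S : Finset V) (v : V) : Finset V :=
  S.filter (IsAncestor T r v ·)

lemma mem_descendantsIn : w ∈ descendantsIn T r S v ↔ w ∈ S ∧ IsAncestor T r v w := by
  simp [descendantsIn]

lemma descendantsIn_subset : descendantsIn T r S v ⊆ S := fun _ hw => (mem_descendantsIn.1 hw).1

lemma descendantsIn_root : descendantsIn T r S r = S :=
  Finset.ext fun _ => mem_descendantsIn.trans (and_iff_left root_isAncestor)

lemma self_mem_descendantsIn (hv : v ∈ S) : v ∈ descendantsIn T r S v :=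
  mem_descendantsIn.2 ⟨hv, isAncestor_refl⟩

lemma IsAncestorClosed.mem_of_mem_descendantsIn (hS : IsAncestorClosed T r S)
    (hw : w ∈ descendantsIn T r S v) : v ∈ S :=
  hS w (mem_descendantsIn.1 hw).1 v (mem_descendantsIn.1 hw).2

lemma IsAncestorClosed.sdiff_descendantsIn [DecidableEq V] (hS : IsAncestorClosed T r S) :
    IsAncestorClosed T r (S \ descendantsIn T r S v) := by
  intro w hw u huw
  rw [Finset.mem_sdiff, mem_descendantsIn] at hw ⊢
  exact ⟨hS w hw.1 u huw, fun hu => hw.2 ⟨hw.1, hu.2.trans huw⟩⟩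

lemma descendantsIn_ssubset_of_adj (hT : T.IsTree) (hv : v ∈ S) (hvc : T.Adj v w)
    (hw : IsAncestor T r v w) : descendantsIn T r S w ⊂ descendantsIn T r S v := by
  refine ⟨fun y hy => ?_, fun hsub => ?_⟩
  · rw [mem_descendantsIn] at hy ⊢
    exact ⟨hy.1, hw.trans hy.2⟩
  · exact hvc.ne (hw.antisymm hT (mem_descendantsIn.1 (hsub (self_mem_descendantsIn hv))).2)

lemma IsAncestorClosed.connected_induce_descendantsIn (hT : T.IsTree)
    (hS : IsAncestorClosed T r S) (hv : v ∈ S) :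
    (T.induce (descendantsIn T r S v : Set V)).Connected := by
  classical
  refine T.induce_connected_of_patches v (self_mem_descendantsIn hv) fun {w} hw => ?_
  obtain ⟨hwS, hvw⟩ := mem_descendantsIn.1 hw
  obtain ⟨p, hp⟩ := (hT.existsUnique_path r w).exists
  set q := p.dropUntil v (hvw p hp)
  refine ⟨{y | y ∈ q.support}, fun y hy => ?_, q.start_mem_support, q.end_mem_support,
    q.connected_induce_support.preconnected _ _⟩
  have hyw : IsAncestor T r y w :=
    (isAncestor_iff_mem_support hT hp).2 (p.support_dropUntil_subset_support _ hy)
  exact mem_descendantsIn.2 ⟨hS w hwS y hyw, isAncestor_of_mem_support_dropUntil hT hp _ hy⟩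

lemma IsAncestorClosed.exists_heavy_with_light_children (hT : T.IsTree)
    (hS : IsAncestorClosed T r S) (ht : 0 < t) (htS : t ≤ S.card) :
    ∃ v ∈ S, t ≤ (descendantsIn T r S v).card ∧
      ∀ c, T.Adj v c → IsAncestor T r v c → (descendantsIn T r S c).card < t := by
  classical
  obtain ⟨w, hw⟩ := Finset.card_pos.1 (ht.trans_le htS)
  have hr : r ∈ S.filter (fun v => t ≤ (descendantsIn T r S v).card) :=
    Finset.mem_filter.2 ⟨hS w hw r root_isAncestor, by rwa [descendantsIn_root]⟩
  obtain ⟨v, hv, hmin⟩ :=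
    Finset.exists_min_image _ (fun v => (descendantsIn T r S v).card) ⟨r, hr⟩
  obtain ⟨hvS, hvt⟩ := Finset.mem_filter.1 hv
  refine ⟨v, hvS, hvt, fun c hvc hc => ?_⟩
  by_contra! hct
  obtain ⟨y, hy⟩ := Finset.card_pos.1 (ht.trans_le hct)
  have hcS : c ∈ S := hS.mem_of_mem_descendantsIn hy
  exact (Finset.card_lt_card (descendantsIn_ssubset_of_adj hT hvS hvc hc)).not_ge
    (hmin c (Finset.mem_filter.2 ⟨hcS, hct⟩))

lemma IsAncestorClosed.card_descendantsIn_le [Finite V] (hT : T.IsTree)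
    (hS : IsAncestorClosed T r S) (hdeg : deg T v ≤ Δ)
    (hlight : ∀ c, T.Adj v c → IsAncestor T r v c → (descendantsIn T r S c).card < t) :
    (descendantsIn T r S v).card ≤ Δ * (t - 1) + 1 := by
  classical
  set C := S.filter (fun c => T.Adj v c ∧ IsAncestor T r v c)
  have hcover : descendantsIn T r S v ⊆ insert v (C.biUnion (descendantsIn T r S)) := by
    intro w hw
    obtain ⟨hwS, hvw⟩ := mem_descendantsIn.1 hw
    rcases eq_or_ne v w with rfl | hne
    · exact Finset.mem_insert_self _ _
    obtain ⟨c, hvc, hc, hcw⟩ := exists_adj_isAncestor_of_isAncestor hT hvw hne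
    have hcC : c ∈ C := Finset.mem_filter.2 ⟨hS w hwS c hcw, hvc, hc⟩
    exact Finset.mem_insert_of_mem
      (Finset.mem_biUnion.2 ⟨c, hcC, mem_descendantsIn.2 ⟨hwS, hcw⟩⟩)
  have hC : C.card ≤ Δ := by
    refine le_trans ?_ hdeg
    rw [deg, ← Set.ncard_coe_finset]
    exact Set.ncard_le_ncard fun c hc => (Finset.mem_filter.1 hc).2.1
  calc (descendantsIn T r S v).card
      ≤ (C.biUnion (descendantsIn T r S)).card + 1 :=
        (Finset.card_le_card hcover).trans (Finset.card_insert_le _ _)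
    _ ≤ ∑ c ∈ C, (descendantsIn T r S c).card + 1 := by
        gcongr; exact Finset.card_biUnion_le
    _ ≤ ∑ _c ∈ C, (t - 1) + 1 := by
        gcongr with c hc
        have := hlight c (Finset.mem_filter.1 hc).2.1 (Finset.mem_filter.1 hc).2.2
        omega
    _ ≤ Δ * (t - 1) + 1 := by
        rw [Finset.sum_const, smul_eq_mul]; gcongr

end Descendants

section Partition

variable {V : Type*} {T : SimpleGraph V} {r v : V} {S : Finset V} {Δ t : ℕ}

structure IsRootedPiece (T : SimpleGraph V) (r : V) (P : Finset V) (x : V) : Prop where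
  root_mem : x ∈ P
  connected : (T.induce (P : Set V)).Connected
  isAncestor : ∀ w ∈ P, IsAncestor T r x w

lemma IsAncestorClosed.isRootedPiece_descendantsIn (hT : T.IsTree)
    (hS : IsAncestorClosed T r S) (hv : v ∈ S) :
    IsRootedPiece T r (descendantsIn T r S v) v :=
  ⟨self_mem_descendantsIn hv, hS.connected_induce_descendantsIn hT hv,
    fun _ hw => (mem_descendantsIn.1 hw).2⟩

theorem IsAncestorClosed.exists_rootedPartition [Finite V] (hT : T.IsTree) (hΔ : 0 < Δ)
    (ht : 0 < t) (hdeg : ∀ v, deg T v ≤ Δ) (hS : IsAncestorClosed T r S) (htS : t ≤ S.card) :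
    ∃ L : List (Finset V × V), L.Pairwise (fun p q => Disjoint p.1 q.1) ∧
      (∀ w, w ∈ S ↔ ∃ p ∈ L, w ∈ p.1) ∧
      ∀ p ∈ L, IsRootedPiece T r p.1 p.2 ∧ t ≤ p.1.card ∧ p.1.card ≤ 2 * Δ * t := by
  classical
  induction S using Finset.strongInduction with
  | H S ih =>
  by_cases hsmall : S.card ≤ 2 * Δ * t
  · obtain ⟨w, hw⟩ := Finset.card_pos.1 (ht.trans_le htS)
    have hpiece := hS.isRootedPiece_descendantsIn hT (hS w hw r root_isAncestor)
    rw [descendantsIn_root] at hpiece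
    exact ⟨[(S, r)], List.pairwise_singleton _ _, by simp,
      by simpa using ⟨hpiece, htS, hsmall⟩⟩
  obtain ⟨v, hv, hheavy, hlight⟩ := hS.exists_heavy_with_light_children hT ht htS
  set P := descendantsIn T r S v
  have hPS : P ⊆ S := descendantsIn_subset
  have hPle : P.card ≤ Δ * t :=
    calc P.card ≤ Δ * (t - 1) + 1 := hS.card_descendantsIn_le hT (hdeg v) hlight
      _ ≤ Δ * (t - 1) + Δ := by omega
      _ = Δ * t := by rw [← mul_add_one, Nat.sub_one_add_one ht.ne']
  have hdouble : 2 * Δ * t = Δ * t + Δ * t := by ring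
  have hPle' : P.card ≤ 2 * Δ * t := by omega
  have hrest : t ≤ (S \ P).card := by
    have : t ≤ Δ * t := Nat.le_mul_of_pos_left t hΔ
    rw [Finset.card_sdiff_of_subset hPS]
    omega
  obtain ⟨L, hdisj, hcover, hpieces⟩ := ih (S \ P)
    (Finset.sdiff_ssubset hPS ⟨v, self_mem_descendantsIn hv⟩) hS.sdiff_descendantsIn hrest
  refine ⟨(P, v) :: L, List.pairwise_cons.2 ⟨fun p hp => ?_, hdisj⟩, fun w => ?_,
    List.forall_mem_cons.2
      ⟨⟨hS.isRootedPiece_descendantsIn hT hv, hheavy, hPle'⟩, hpieces⟩⟩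
  · exact Finset.disjoint_of_subset_right (fun w hw => (hcover w).2 ⟨p, hp, hw⟩)
      Finset.disjoint_sdiff
  · have := @hPS w
    simp only [List.mem_cons, exists_eq_or_imp, ← hcover, Finset.mem_sdiff]
    tauto

end Partition

theorem rooted_tree_partition_general (n Δ t : ℕ) (hn : n ≠ 1)
    (ht1 : 1 ≤ t) (htn : t ≤ n)
    (T : SimpleGraph (Fin n)) (hT : T.IsTree) (r : Fin n)
    (hdeg : ∀ v, deg T v ≤ Δ) :
    ∃ (k : ℕ) (Vs : Fin k → Finset (Fin n)) (x : Fin k → Fin n),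
      (∀ i j, i ≠ j → Disjoint (Vs i) (Vs j)) ∧
      (∀ i, x i ∈ Vs i) ∧
      (∀ i, (SimpleGraph.induce (↑(Vs i) : Set (Fin n)) T).Connected) ∧
      (∀ i, ∀ v ∈ Vs i, ∀ p : T.Walk r v, p.IsPath → x i ∈ p.support) ∧
      (∀ i, t ≤ (Vs i).card ∧ (Vs i).card ≤ 2 * Δ * t) ∧
      (∀ v : Fin n, ∃ i, v ∈ Vs i) := by
  have : Nontrivial (Fin n) := Fin.nontrivial_iff_two_le.2 (by omega)
  have hΔ : 0 < Δ := by
    obtain ⟨u, hu⟩ := hT.connected.preconnected.exists_adj_of_nontrivial r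
    exact ((Set.ncard_pos (Set.toFinite _)).2 ⟨u, hu⟩).trans_le (hdeg r)
  obtain ⟨L, hdisj, hcover, hpieces⟩ := IsAncestorClosed.exists_rootedPartition hT hΔ ht1 hdeg
    (S := Finset.univ) (fun _ _ _ _ => Finset.mem_univ _) (by simpa using htn)
  have hpiece (i : Fin L.length) := hpieces _ (L.getElem_mem i.2)
  refine ⟨L.length, fun i => L[i].1, fun i => L[i].2, fun i j hij => ?_,
    fun i => (hpiece i).1.root_mem, fun i => (hpiece i).1.connected,
    fun i => (hpiece i).1.isAncestor, fun i => (hpiece i).2, fun v => ?_⟩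
  · rcases Fin.lt_or_lt_of_ne hij with h | h
    · exact List.pairwise_iff_getElem.1 hdisj i j i.2 j.2 h
    · exact (List.pairwise_iff_getElem.1 hdisj j i j.2 i.2 h).symm
  · obtain ⟨p, hp, hvp⟩ := (hcover v).1 (Finset.mem_univ v)
    obtain ⟨i, hi, rfl⟩ := List.getElem_of_mem hp
    exact ⟨⟨i, hi⟩, hvp⟩

/-- Proposition 2.9: a rooted bounded-degree tree can be partitioned into
vertex-disjoint rooted subtrees of size between `t` and `2Δt`, each contained
in the set of descendants of its root. Here `x i ∈ p.support` for every path
`p` from `r` to `v` expresses that `v` lies in `T(x i)`, i.e. `v` is a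
descendant of `x i` with respect to the root `r`. -/
theorem rooted_tree_partition (n Δ t : ℕ) (hn : n ≠ 1) (hΔ : Δ ≠ 1)
    (ht1 : 1 ≤ t) (htn : t ≤ n)
    (T : SimpleGraph (Fin n)) (hT : T.IsTree) (r : Fin n)
    (hdeg : ∀ v, deg T v ≤ Δ) :
    ∃ (k : ℕ) (Vs : Fin k → Finset (Fin n)) (x : Fin k → Fin n),
      (∀ i j, i ≠ j → Disjoint (Vs i) (Vs j)) ∧
      (∀ i, x i ∈ Vs i) ∧
      (∀ i, (SimpleGraph.induce (↑(Vs i) : Set (Fin n)) T).Connected) ∧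
      (∀ i, ∀ v ∈ Vs i, ∀ p : T.Walk r v, p.IsPath → x i ∈ p.support) ∧
      (∀ i, t ≤ (Vs i).card ∧ (Vs i).card ≤ 2 * Δ * t) ∧
      (∀ v : Fin n, ∃ i, v ∈ Vs i) :=
  rooted_tree_partition_general n Δ t hn ht1 htn T hT r hdeg

end ApproxDecomp
end

section
/- There exists C₀ ∈ ℕ such that for every integer C ≥ C₀ the following holds: with high probability (probability tending to 1 as n → ∞), the binomial random graph 𝐆(n, C/n) contains no (⌈C^{−1/3}n⌉, ⌈C^{−1/3}n⌉)-bipartite hole; consequently, with high probability, ᾶ(𝐆(n, C/n)) ≤ 2C^{−1/3}n, and hence for any graph G on the same vertex set, ᾶ(G ∪ 𝐆(n, C/n)) ≤ 2C^{−1/3}n with high probability. -/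
/-!
A fixed pair of disjoint `m`-sets spans `m²` potential edges, all of which are absent with
probability `(1 - p)^{m²} ≤ exp (-p m²)`. There are at most `4ⁿ` such pairs, so an `(m, m)`-hole
exists with probability at most `4ⁿ exp (-p m²)`. For `p = C/n` and `m = ⌊C^{-1/3} n⌋` one has
`p m² ≥ C^{1/3} n / 2 ≥ 2n` once `C ≥ 64`, so this is at most `(4 e⁻²)ⁿ → 0`. Finally, if `g`
has no `(m, m)`-hole then neither has any subgraph of a supergraph `H ≥ g`, so `biIndep H < 2m`.
-/

open SimpleGraph

namespace ApproxDecomp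

/-- An `(s,t)`-bipartite hole: two disjoint vertex sets of sizes `s`, `t`
with no edges between them. -/
def HasBipartiteHole {V : Type*} (G : SimpleGraph V) (s t : ℕ) : Prop :=
  ∃ S T : Finset V, Disjoint S T ∧ S.card = s ∧ T.card = t ∧
    ∀ a ∈ S, ∀ b ∈ T, ¬ G.Adj a b

/-- The bi-independence number: the largest `r` such that `G` has an
`(s,t)`-bipartite hole for every `s + t = r`. -/
noncomputable def biIndep {V : Type*} (G : SimpleGraph V) : ℕ :=
  sSup {r : ℕ | ∀ s t : ℕ, s + t = r → HasBipartiteHole G s t}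

/-- The set of potential edges (non-diagonal unordered pairs) on `Fin n`. -/
def potentialEdges (n : ℕ) : Finset (Sym2 (Fin n)) :=
  Finset.univ.filter fun e : Sym2 (Fin n) => ¬ e.IsDiag

open scoped Classical in
/-- The probability that the binomial random graph `G(n,p)` on `Fin n`
satisfies the property `P`: each potential edge is included independently
with probability `p`. -/
noncomputable def binomialProb (n : ℕ) (p : ℝ) (P : SimpleGraph (Fin n) → Prop) : ℝ :=
  ∑ s ∈ (potentialEdges n).powerset,
    if P (SimpleGraph.fromEdgeSet (↑s)) then
      p ^ s.card * (1 - p) ^ ((potentialEdges n).card - s.card)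
    else 0

open Finset Filter

section BipartiteHole

variable {V : Type*} {G H : SimpleGraph V} {s t s' t' m : ℕ}

lemma HasBipartiteHole.mono_card (h : HasBipartiteHole G s t) (hs : s' ≤ s) (ht : t' ≤ t) :
    HasBipartiteHole G s' t' := by
  obtain ⟨S, T, hST, rfl, rfl, hno⟩ := h
  obtain ⟨S', hS'S, hS'⟩ := exists_subset_card_eq hs
  obtain ⟨T', hT'T, hT'⟩ := exists_subset_card_eq ht
  exact ⟨S', T', hST.mono hS'S hT'T, hS', hT', fun a ha b hb => hno a (hS'S ha) b (hT'T hb)⟩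

lemma HasBipartiteHole.anti (hGH : G ≤ H) (h : HasBipartiteHole H s t) :
    HasBipartiteHole G s t := by
  obtain ⟨S, T, hST, hS, hT, hno⟩ := h
  exact ⟨S, T, hST, hS, hT, fun a ha b hb hab => hno a ha b hb (hGH hab)⟩

lemma hasBipartiteHole_zero_zero : HasBipartiteHole G 0 0 :=
  ⟨∅, ∅, disjoint_bot_left, rfl, rfl, by simp⟩

lemma biIndep_lt_two_mul (hGH : G ≤ H) (h : ¬ HasBipartiteHole G m m) : biIndep H < 2 * m := by
  set R := {r : ℕ | ∀ s t : ℕ, s + t = r → HasBipartiteHole H s t}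
  have hR : ∀ r ∈ R, r < 2 * m := fun r hr => by
    by_contra! hmr
    exact h (((hr m (r - m) (by omega)).anti hGH).mono_card le_rfl (by omega))
  have h0 : 0 ∈ R := fun s t hst => by
    obtain ⟨rfl, rfl⟩ : s = 0 ∧ t = 0 := by omega
    exact hasBipartiteHole_zero_zero
  exact hR _ (Nat.sSup_mem ⟨0, h0⟩ ⟨2 * m, fun r hr => (hR r hr).le⟩)

lemma biIndep_le_two_mul_of_not_hasBipartiteHole {x : ℝ} (hx : 0 ≤ x) (hGH : G ≤ H)
    (h : ¬ HasBipartiteHole G ⌊x⌋₊ ⌊x⌋₊) : (biIndep H : ℝ) ≤ 2 * x := by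
  have hlt : (biIndep H : ℝ) < 2 * ⌊x⌋₊ := by exact_mod_cast biIndep_lt_two_mul hGH h
  linarith [Nat.floor_le hx]

end BipartiteHole

section BinomialProb

variable {n : ℕ} {p : ℝ}

lemma edgeWeight_nonneg (hp0 : 0 ≤ p) (hp1 : p ≤ 1) (s : Finset (Sym2 (Fin n))) :
    0 ≤ p ^ #s * (1 - p) ^ (#(potentialEdges n) - #s) :=
  mul_nonneg (pow_nonneg hp0 _) (pow_nonneg (sub_nonneg.2 hp1) _)

lemma binomialProb_mono (hp0 : 0 ≤ p) (hp1 : p ≤ 1) {P Q : SimpleGraph (Fin n) → Prop}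
    (h : ∀ g, P g → Q g) : binomialProb n p P ≤ binomialProb n p Q := by
  unfold binomialProb
  gcongr with s
  split_ifs with hP hQ
  · exact le_rfl
  · exact absurd (h _ hP) hQ
  · exact edgeWeight_nonneg hp0 hp1 s
  · exact le_rfl

lemma binomialProb_add_binomialProb_not (P : SimpleGraph (Fin n) → Prop) :
    binomialProb n p P + binomialProb n p (fun g => ¬ P g) = 1 := by
  unfold binomialProb
  rw [← sum_add_distrib]
  calc _ = ∑ s ∈ (potentialEdges n).powerset, p ^ #s * (1 - p) ^ (#(potentialEdges n) - #s) :=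
        sum_congr rfl fun s _ => by split_ifs <;> simp_all
    _ = 1 := by simp [sum_pow_mul_eq_add_pow]

lemma binomialProb_exists_le (hp0 : 0 ≤ p) (hp1 : p ≤ 1) {ι : Type*} (I : Finset ι)
    (Q : ι → SimpleGraph (Fin n) → Prop) :
    binomialProb n p (fun g => ∃ i ∈ I, Q i g) ≤ ∑ i ∈ I, binomialProb n p (Q i) := by
  unfold binomialProb
  rw [sum_comm]
  gcongr with s
  split_ifs with h
  · obtain ⟨i, hi, hQ⟩ := h
    refine le_trans ?_ (single_le_sum (fun j _ => ?_) hi)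
    · rw [if_pos hQ]
    · split_ifs
      exacts [edgeWeight_nonneg hp0 hp1 s, le_rfl]
  · exact sum_nonneg fun i _ => by split_ifs; exacts [edgeWeight_nonneg hp0 hp1 s, le_rfl]

lemma binomialProb_forall_notMem_edgeSet {E : Finset (Sym2 (Fin n))}
    (hE : E ⊆ potentialEdges n) :
    binomialProb n p (fun g => ∀ e ∈ E, e ∉ g.edgeSet) = (1 - p) ^ #E := by
  have hcond : ∀ s : Finset (Sym2 (Fin n)),
      (∀ e ∈ E, e ∉ (fromEdgeSet (s : Set (Sym2 (Fin n)))).edgeSet) ↔ Disjoint s E := by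
    intro s
    rw [disjoint_right]
    refine forall₂_congr fun e he => ?_
    have hdiag : ¬ e.IsDiag := (mem_filter.1 (hE he)).2
    simp [edgeSet_fromEdgeSet, hdiag]
  have hfilter : (potentialEdges n).powerset.filter (fun s => Disjoint s E)
      = (potentialEdges n \ E).powerset := by
    ext s
    simp [subset_sdiff]
  have hsplit : ∀ s ∈ (potentialEdges n \ E).powerset,
      p ^ #s * (1 - p) ^ (#(potentialEdges n) - #s)
        = (1 - p) ^ #E * (p ^ #s * (1 - p) ^ (#(potentialEdges n \ E) - #s)) := by
    intro s hs
    have hsE := card_le_card (mem_powerset.1 hs)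
    have hcard := card_sdiff_add_card_eq_card hE
    rw [show #(potentialEdges n) - #s = #E + (#(potentialEdges n \ E) - #s) by omega, pow_add]
    ring
  unfold binomialProb
  simp_rw [hcond]
  rw [← sum_filter, hfilter, sum_congr rfl hsplit, ← mul_sum, sum_pow_mul_eq_add_pow]
  simp

end BinomialProb

section BetweenEdges

variable {V : Type*} [DecidableEq V]

def betweenEdges (S T : Finset V) : Finset (Sym2 V) :=
  (S ×ˢ T).image fun ab => s(ab.1, ab.2)

lemma card_betweenEdges {S T : Finset V} (hST : Disjoint S T) :
    #(betweenEdges S T) = #S * #T := by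
  rw [betweenEdges, card_image_of_injOn, card_product]
  rintro ⟨a, b⟩ hab ⟨a', b'⟩ hab' heq
  simp only [coe_product, Set.mem_prod, mem_coe] at hab hab'
  rcases Sym2.eq_iff.1 heq with ⟨rfl, rfl⟩ | ⟨rfl, rfl⟩
  · rfl
  · exact absurd hab'.2 (disjoint_left.1 hST hab.1)

lemma betweenEdges_subset_potentialEdges {n : ℕ} {S T : Finset (Fin n)} (hST : Disjoint S T) :
    betweenEdges S T ⊆ potentialEdges n := by
  simp only [betweenEdges, subset_iff, mem_image, mem_product, potentialEdges, mem_filter,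
    mem_univ, true_and]
  rintro _ ⟨⟨a, b⟩, ⟨ha, hb⟩, rfl⟩
  exact Sym2.mk_isDiag_iff.not.2 fun hab => disjoint_left.1 hST ha (hab ▸ hb)

lemma forall_notMem_edgeSet_betweenEdges {G : SimpleGraph V} {S T : Finset V}
    (h : ∀ a ∈ S, ∀ b ∈ T, ¬ G.Adj a b) : ∀ e ∈ betweenEdges S T, e ∉ G.edgeSet := by
  simp only [betweenEdges, forall_mem_image, mem_product, mem_edgeSet]
  exact fun ab hab => h ab.1 hab.1 ab.2 hab.2

end BetweenEdges

lemma binomialProb_hasBipartiteHole_le {n : ℕ} {p : ℝ} (hp0 : 0 ≤ p) (hp1 : p ≤ 1) (m : ℕ) :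
    binomialProb n p (fun g => HasBipartiteHole g m m) ≤ 4 ^ n * (1 - p) ^ (m * m) := by
  set Pairs := (powersetCard m (univ : Finset (Fin n)) ×ˢ powersetCard m univ).filter
    fun ST => Disjoint ST.1 ST.2
  have hPairs : (#Pairs : ℝ) ≤ 4 ^ n := by
    have : #Pairs ≤ 2 ^ n * 2 ^ n := by
      refine (card_filter_le _ _).trans ?_
      rw [card_product, card_powersetCard, card_univ, Fintype.card_fin]
      exact Nat.mul_le_mul (Nat.choose_le_two_pow n m) (Nat.choose_le_two_pow n m)
    exact_mod_cast this.trans_eq (by norm_num [← mul_pow])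
  calc binomialProb n p (fun g => HasBipartiteHole g m m)
      ≤ binomialProb n p
          (fun g => ∃ ST ∈ Pairs, ∀ e ∈ betweenEdges ST.1 ST.2, e ∉ g.edgeSet) := by
        refine binomialProb_mono hp0 hp1 fun g ⟨S, T, hST, hS, hT, hno⟩ => ⟨(S, T), ?_, ?_⟩
        · simp [Pairs, hST, hS, hT]
        · exact forall_notMem_edgeSet_betweenEdges hno
    _ ≤ ∑ ST ∈ Pairs, binomialProb n p (fun g => ∀ e ∈ betweenEdges ST.1 ST.2, e ∉ g.edgeSet) :=
        binomialProb_exists_le hp0 hp1 _ _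
    _ = ∑ _ST ∈ Pairs, (1 - p) ^ (m * m) := sum_congr rfl fun ST hST => by
        obtain ⟨hmem, hdisj⟩ := mem_filter.1 hST
        simp only [mem_product, mem_powersetCard] at hmem
        rw [binomialProb_forall_notMem_edgeSet (betweenEdges_subset_potentialEdges hdisj),
          card_betweenEdges hdisj, hmem.1.2, hmem.2.2]
    _ ≤ 4 ^ n * (1 - p) ^ (m * m) := by
        rw [sum_const, nsmul_eq_mul]
        exact mul_le_mul_of_nonneg_right hPairs (pow_nonneg (sub_nonneg.2 hp1) _)

lemma mul_rpow_neg_one_third_pow_three {C : ℝ} (hC : 0 < C) :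
    C * (C ^ (-(1 : ℝ) / 3)) ^ 3 = 1 := by
  rw [← Real.rpow_natCast, ← Real.rpow_mul hC.le]
  norm_num [Real.rpow_neg_one, hC.ne']

lemma two_mul_le_div_mul_floor_sq {C c x : ℝ} (hx : 0 < x) (hcC : C * c ^ 3 = 1) (hc : c ≤ 1 / 4)
    (hcx : 4 ≤ c * x) : 2 * x ≤ C / x * (⌊c * x⌋₊ : ℝ) ^ 2 := by
  have hfloor : c * x - 1 ≤ ⌊c * x⌋₊ := by linarith [Nat.lt_floor_add_one (c * x)]
  -- `(c x - 1)² ≥ (c x)² / 2` since `c x ≥ 4`, and `C c² = 1 / c ≥ 4`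
  have hsq : (c * x) ^ 2 / 2 ≤ (⌊c * x⌋₊ : ℝ) ^ 2 := by nlinarith
  have hc0 : 0 < c := pos_of_mul_pos_left (by linarith : 0 < c * x) hx.le
  have hCc : 4 ≤ C * c ^ 2 := by nlinarith [pow_pos hc0 2]
  calc 2 * x = C / x * ((c * x) ^ 2 / 2) - (C * c ^ 2 - 4) * x / 2 := by field_simp; ring
    _ ≤ C / x * ((c * x) ^ 2 / 2) := by nlinarith
    _ ≤ C / x * (⌊c * x⌋₊ : ℝ) ^ 2 :=
        mul_le_mul_of_nonneg_left hsq (div_nonneg (by nlinarith [pow_pos hc0 2]) hx.le)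

lemma four_mul_exp_neg_two_lt_one : 4 * Real.exp (-2) < 1 := by
  rw [Real.exp_neg, ← div_eq_mul_inv, div_lt_one (Real.exp_pos 2),
    show (2 : ℝ) = 1 + 1 by norm_num, Real.exp_add]
  nlinarith [Real.exp_one_gt_two]

lemma one_sub_pow_le_exp_neg_mul {p : ℝ} (hp1 : p ≤ 1) (k : ℕ) :
    (1 - p) ^ k ≤ Real.exp (-(p * k)) := by
  rw [show -(p * k) = k * -p by ring, Real.exp_nat_mul]
  exact pow_le_pow_left₀ (sub_nonneg.2 hp1) (Real.one_sub_le_exp_neg p) k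

lemma binomialProb_hasBipartiteHole_floor_le {n : ℕ} {C c : ℝ} (hp0 : 0 ≤ C / n)
    (hp1 : C / n ≤ 1) (hcC : C * c ^ 3 = 1) (hc : c ≤ 1 / 4) (hcn : 4 ≤ c * n) :
    binomialProb n (C / n) (fun g => HasBipartiteHole g ⌊c * n⌋₊ ⌊c * n⌋₊)
      ≤ (4 * Real.exp (-2)) ^ n := by
  set m := ⌊c * n⌋₊
  have hn : (0 : ℝ) < n := by nlinarith [n.cast_nonneg (α := ℝ)]
  calc _ ≤ 4 ^ n * (1 - C / n) ^ (m * m) := binomialProb_hasBipartiteHole_le hp0 hp1 m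
    _ ≤ 4 ^ n * Real.exp (-(C / n * ↑(m * m))) := by
        gcongr; exact one_sub_pow_le_exp_neg_mul hp1 _
    _ ≤ 4 ^ n * Real.exp (-(2 * n)) := by
        gcongr 4 ^ n * Real.exp (-?_)
        rw [Nat.cast_mul, ← sq]
        exact two_mul_le_div_mul_floor_sq hn hcC hc hcn
    _ = (4 * Real.exp (-2)) ^ n := by rw [mul_pow, ← Real.exp_nat_mul]; ring_nf

/-- For large constants `C`, whp `G(n, C/n)` has no
`(⌈C^{-1/3}n⌉, ⌈C^{-1/3}n⌉)`-bipartite hole; consequently its bi-independence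
number is at most `2C^{-1/3}n`, and so is that of `G ∪ G(n, C/n)` for any
graph `G` on the same vertex set. -/
theorem random_graph_no_bipartite_hole :
    ∃ C₀ : ℕ, ∀ C : ℕ, C₀ ≤ C →
      ∀ εP : ℝ, 0 < εP →
      ∃ n₀ : ℕ, ∀ n : ℕ, n₀ ≤ n →
        1 - εP ≤ binomialProb n ((C : ℝ) / n) (fun g =>
          ¬ HasBipartiteHole g ⌈(C : ℝ) ^ (-(1 : ℝ)/3) * n⌉₊ ⌈(C : ℝ) ^ (-(1 : ℝ)/3) * n⌉₊ ∧
          (biIndep g : ℝ) ≤ 2 * (C : ℝ) ^ (-(1 : ℝ)/3) * n ∧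
          ∀ G : SimpleGraph (Fin n),
            (biIndep (G ⊔ g) : ℝ) ≤ 2 * (C : ℝ) ^ (-(1 : ℝ)/3) * n) := by
  refine ⟨64, fun C hC ε hε => ?_⟩
  set c : ℝ := (C : ℝ) ^ (-(1 : ℝ) / 3)
  have hC64 : (64 : ℝ) ≤ C := by exact_mod_cast hC
  have hcC : (C : ℝ) * c ^ 3 = 1 := mul_rpow_neg_one_third_pow_three (by linarith)
  have hc0 : 0 < c := Real.rpow_pos_of_pos (by linarith) _
  have hc : c ≤ 1 / 4 := le_of_pow_le_pow_left₀ three_ne_zero (by norm_num) (by nlinarith)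
  obtain ⟨n₀, hn₀⟩ := eventually_atTop.1 <|
    ((tendsto_natCast_atTop_atTop.const_mul_atTop hc0).eventually_ge_atTop 4).and <|
    (tendsto_natCast_atTop_atTop.eventually_ge_atTop (C : ℝ)).and <|
    (tendsto_pow_atTop_nhds_zero_of_lt_one (by positivity) four_mul_exp_neg_two_lt_one).eventually
      (ge_mem_nhds hε)
  refine ⟨n₀, fun n hn => ?_⟩
  obtain ⟨hcn, hCn, hsmall⟩ := hn₀ n hn
  have hp0 : 0 ≤ (C : ℝ) / n := by positivity
  have hp1 : (C : ℝ) / n ≤ 1 := div_le_one_of_le₀ hCn n.cast_nonneg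
  set m := ⌊c * n⌋₊
  have hhole : binomialProb n ((C : ℝ) / n) (fun g => HasBipartiteHole g m m) ≤ ε :=
    (binomialProb_hasBipartiteHole_floor_le hp0 hp1 hcC hc hcn).trans hsmall
  have hbiIndep : ∀ g H : SimpleGraph (Fin n), g ≤ H → ¬ HasBipartiteHole g m m →
      (biIndep H : ℝ) ≤ 2 * c * n := fun g H hgH hg => by
    rw [mul_assoc]; exact biIndep_le_two_mul_of_not_hasBipartiteHole (by positivity) hgH hg
  calc 1 - ε ≤ binomialProb n ((C : ℝ) / n) (fun g => ¬ HasBipartiteHole g m m) := by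
        linarith [binomialProb_add_binomialProb_not (p := (C : ℝ) / n)
          (fun g : SimpleGraph (Fin n) => HasBipartiteHole g m m)]
    _ ≤ _ := binomialProb_mono hp0 hp1 fun g hg =>
        ⟨fun h => hg (h.mono_card (Nat.floor_le_ceil _) (Nat.floor_le_ceil _)),
          hbiIndep g g le_rfl hg, fun G => hbiIndep g (G ⊔ g) le_sup_right hg⟩

end ApproxDecomp
end
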